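/- Let 𝔤 = 𝔥₃ ⊕ 𝔥₃, oriented by e¹∧e²∧e³∧f¹∧f²∧f³, and let ρ ∈ Λ³𝔤* be a closed stable 3-form, i.e., dρ = 0 and λ(ρ) ≠ 0. Then the 4-form d(J_ρ^*ρ) lies in Λ⁴U, where U = ker(d : Λ¹𝔤* → Λ²𝔤*) = span{e¹, e², f¹, f²} and (J_ρ^*ρ)(x,y,z) := ρ(J_ρ x, J_ρ y, J_ρ z). -/

import Mathlib

open Module TensorProduct

noncomputable section

namespace StableForms

variable {V : Type} [AddCommGroup V] [Module ℝ V]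

/-- The wedge product of two real-valued alternating forms
(in the determinant/shuffle convention). -/
def wedge {k l : ℕ} (f : V [⋀^Fin k]→ₗ[ℝ] ℝ) (g : V [⋀^Fin l]→ₗ[ℝ] ℝ) :
    V [⋀^Fin (k + l)]→ₗ[ℝ] ℝ :=
  ((TensorProduct.lid ℝ ℝ).toLinearMap.compAlternatingMap
    (f.domCoprod g)).domDomCongr finSumFinEquiv

/-- The one-form associated to a dual vector. -/
def oneForm (l : Module.Dual ℝ V) : V [⋀^Fin 1]→ₗ[ℝ] ℝ :=
  AlternatingMap.ofSubsingleton ℝ V ℝ 0 l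

/-- The wedge product of three one-forms. -/
def wedge3 (l1 l2 l3 : Module.Dual ℝ V) : V [⋀^Fin 3]→ₗ[ℝ] ℝ :=
  wedge (wedge (oneForm l1) (oneForm l2)) (oneForm l3)

/-- The canonical map `V ⊗ Λ⁶V* → Λ⁵V*`, `v ⊗ ν ↦ ι_v ν`; it is an isomorphism
when `dim V = 6`, and `κ` of the paper is its inverse. -/
def eps : V ⊗[ℝ] (V [⋀^Fin 6]→ₗ[ℝ] ℝ) →ₗ[ℝ] (V [⋀^Fin 5]→ₗ[ℝ] ℝ) :=
  TensorProduct.lift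
    ((AlternatingMap.curryLeftLinearMap :
      (V [⋀^Fin 6]→ₗ[ℝ] ℝ) →ₗ[ℝ] V →ₗ[ℝ] (V [⋀^Fin 5]→ₗ[ℝ] ℝ)).flip)

variable [FiniteDimensional ℝ V]

/-- The trace over `V` of a linear map `V → V ⊗ W`, with values in `W`
(independent of the choice of basis). -/
def trace2 {W : Type} [AddCommGroup W] [Module ℝ W] (f : V →ₗ[ℝ] V ⊗[ℝ] W) : W :=
  ∑ i : Fin (Module.finrank ℝ V),
    TensorProduct.lid ℝ W
      ((LinearMap.rTensor W ((Module.finBasis ℝ V).coord i)) (f (Module.finBasis ℝ V i)))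

/-- The square `K² : V → V ⊗ (W ⊗ W)` of a twisted endomorphism `K : V → V ⊗ W`. -/
def Ksq {W : Type} [AddCommGroup W] [Module ℝ W] (K : V →ₗ[ℝ] V ⊗[ℝ] W) :
    V →ₗ[ℝ] V ⊗[ℝ] (W ⊗[ℝ] W) :=
  (TensorProduct.assoc ℝ V W W).toLinearMap ∘ₗ (LinearMap.rTensor W K) ∘ₗ K

/-- The quartic invariant `λ(ρ) = (1/6)·tr(K_ρ²) ∈ (Λ⁶V*)^{⊗2}`, expressed in terms
of `K = K_ρ`. -/
def lam {W : Type} [AddCommGroup W] [Module ℝ W] (K : V →ₗ[ℝ] V ⊗[ℝ] W) : W ⊗[ℝ] W :=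
  (6 : ℝ)⁻¹ • trace2 (Ksq K)

/-- `K` is the map `K_ρ : V → V ⊗ Λ⁶V*` associated to the three-form `ρ`, characterised
by `K_ρ(v) = κ((ι_v ρ) ∧ ρ)`, i.e. `ε(K v) = (ι_v ρ) ∧ ρ` for the canonical map `ε = κ⁻¹`
(this determines `K` uniquely since `ε` is an isomorphism for `dim V = 6`). -/
def IsK (ρ : V [⋀^Fin 3]→ₗ[ℝ] ℝ)
    (K : V →ₗ[ℝ] V ⊗[ℝ] (V [⋀^Fin 6]→ₗ[ℝ] ℝ)) : Prop :=
  ∀ v : V, eps (K v) = wedge (ρ.curryLeft v) ρ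

/-- Positivity in the one-dimensional space `(Λ⁶V*)^{⊗2}`:
`x > 0` iff `x = s ⊗ s` for some `s ≠ 0`. -/
def IsPosTensor (x : (V [⋀^Fin 6]→ₗ[ℝ] ℝ) ⊗[ℝ] (V [⋀^Fin 6]→ₗ[ℝ] ℝ)) : Prop :=
  ∃ s : V [⋀^Fin 6]→ₗ[ℝ] ℝ, s ≠ 0 ∧ x = s ⊗ₜ[ℝ] s

/-- A six-form is positively oriented w.r.t. an orientation `o`. -/
def PosOriented (o : Orientation ℝ V (Fin 6)) (ν : V [⋀^Fin 6]→ₗ[ℝ] ℝ) : Prop :=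
  ∃ h : ν ≠ 0, rayOfNeZero ℝ ν h = o

/-- `φ` is the volume form `φ(ρ)` of the stable three-form `ρ` (with `K = K_ρ`):
positively oriented with `φ ⊗ φ = |λ(ρ)|`, i.e. `φ ⊗ φ = ± λ(ρ)`. -/
def IsVolOf (o : Orientation ℝ V (Fin 6))
    (K : V →ₗ[ℝ] V ⊗[ℝ] (V [⋀^Fin 6]→ₗ[ℝ] ℝ)) (φ : V [⋀^Fin 6]→ₗ[ℝ] ℝ) : Prop :=
  PosOriented o φ ∧ (φ ⊗ₜ[ℝ] φ = lam K ∨ φ ⊗ₜ[ℝ] φ = - lam K)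

/-- `J` is the endomorphism `J_ρ = K_ρ / φ(ρ)`, i.e. `K_ρ v = (J v) ⊗ φ(ρ)`. -/
def IsJ (K : V →ₗ[ℝ] V ⊗[ℝ] (V [⋀^Fin 6]→ₗ[ℝ] ℝ)) (φ : V [⋀^Fin 6]→ₗ[ℝ] ℝ)
    (J : V →ₗ[ℝ] V) : Prop :=
  ∀ v : V, K v = J v ⊗ₜ[ℝ] φ

/-- A real three-form is decomposable if it is a wedge product of three one-forms. -/
def Decomp3 (α : V [⋀^Fin 3]→ₗ[ℝ] ℝ) : Prop :=
  ∃ l1 l2 l3 : Module.Dual ℝ V, α = wedge3 l1 l2 l3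

end StableForms

noncomputable section

namespace H3H3

open StableForms

/-- The underlying 6-dimensional vector space of `𝔤 = 𝔥₃ ⊕ 𝔥₃`, with basis
`e₁, e₂, e₃, f₁, f₂, f₃` realised as the standard basis of `ℝ⁶` (indices `0,…,5`). -/
abbrev V6 : Type := Fin 6 → ℝ

/-- The dual basis one-forms `e¹, e², e³, f¹, f², f³` (indices `0,…,5`). -/
def p (i : Fin 6) : V6 [⋀^Fin 1]→ₗ[ℝ] ℝ := oneForm (LinearMap.proj i)

/-- `U = ker(d : Λ¹𝔤* → Λ²𝔤*) = span{e¹, e², f¹, f²}`. -/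
def U : Submodule ℝ (V6 [⋀^Fin 1]→ₗ[ℝ] ℝ) :=
  Submodule.span ℝ {p 0, p 1, p 3, p 4}

/-- `Λ⁴U`, the space of 4-forms spanned by wedge products of elements of `U`,
viewed as a subspace of `Λ⁴𝔤*`. -/
def quadU : Submodule ℝ (V6 [⋀^Fin 4]→ₗ[ℝ] ℝ) :=
  Submodule.span ℝ
    {x : V6 [⋀^Fin 4]→ₗ[ℝ] ℝ | ∃ a b c d : V6 [⋀^Fin 1]→ₗ[ℝ] ℝ,
      a ∈ U ∧ b ∈ U ∧ c ∈ U ∧ d ∈ U ∧ x = wedge (wedge (wedge a b) c) d}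

/-- The six-form `e¹∧e²∧e³∧f¹∧f²∧f³` orienting `𝔤`. -/
def E6 : V6 [⋀^Fin 6]→ₗ[ℝ] ℝ :=
  wedge (wedge (wedge (wedge (wedge (p 0) (p 1)) (p 2)) (p 3)) (p 4)) (p 5)

end H3H3


/-!
Write `e₁, …, f₃` as `𝐞 0, …, 𝐞 5`. Expanding a 3-form in the basis `e^{ijk}` and using
`de² = e⁰¹`, `de⁵ = e³⁴` (all other `deⁱ = 0`), the only components of `ρ` whose differential
leaves `Λ⁴U` are those containing both `e²` and `e⁵`, and their differentials are linearly
independent. Hence `dρ = 0` forces `ι_{𝐞 5} ι_{𝐞 2} ρ = 0`, and conversely every 3-form with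
`ι_{𝐞 5} ι_{𝐞 2} ρ = 0` has `dρ ∈ Λ⁴U`.

It remains to see that `J_ρ^*ρ` inherits this property, i.e. that `J_ρ` preserves the plane
`P = span {𝐞 2, 𝐞 5}`. For `z ∈ P`, the 5-form `(ι_z ρ) ∧ ρ = ι_{J z} φ` is killed by `ι_x ι_y` for
all `x, y ∈ P`: in every shuffle term either a vector of `P` enters `ι_z ρ`, which vanishes on `P`,
or both enter `ρ`. As `φ` is a volume form, this forces all coordinates of `J z` outside `P` to
vanish.
-/

namespace AlternatingMap

variable {R M N : Type*} [CommRing R] [AddCommGroup M] [Module R M] [AddCommGroup N] [Module R N]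
  {n : ℕ}

theorem sum_apply {α : Type*} (S : Finset α) (F : α → M [⋀^Fin n]→ₗ[R] N) (v : Fin n → M) :
    (∑ s ∈ S, F s) v = ∑ s ∈ S, F s v := by
  have := congrArg (fun m => m v) (map_sum (toMultilinearMapLM (S := R)) F S)
  simp only [toMultilinearMapLM_apply, _root_.sum_apply] at this
  exact this

theorem map_eq_zero_of_curryLeft_eq_zero {f : M [⋀^Fin (n + 1)]→ₗ[R] N} {x : M}
    (hf : f.curryLeft x = 0) {v : Fin (n + 1) → M} {i : Fin (n + 1)} (hv : v i = x) :
    f v = 0 := by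
  rw [← Fin.insertNth_self_removeNth i v, map_insertNth, hv, ← curryLeft_apply_apply, hf,
    zero_apply, smul_zero]

theorem map_eq_zero_of_curryLeft_curryLeft_eq_zero {f : M [⋀^Fin (n + 2)]→ₗ[R] N} {x y : M}
    (hf : (f.curryLeft x).curryLeft y = 0) {v : Fin (n + 2) → M} {i j : Fin (n + 2)}
    (hij : i ≠ j) (hx : v i = x) (hy : v j = y) : f v = 0 := by
  obtain ⟨k, rfl⟩ := Fin.exists_succAbove_eq hij.symm
  rw [← Fin.insertNth_self_removeNth i v, map_insertNth, hx, ← curryLeft_apply_apply,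
    map_eq_zero_of_curryLeft_eq_zero hf (i := k) (by simpa [Fin.removeNth] using hy), smul_zero]

theorem curryLeft_curryLeft_swap (f : M [⋀^Fin (n + 2)]→ₗ[R] N) (x y : M) :
    (f.curryLeft y).curryLeft x = -(f.curryLeft x).curryLeft y := by
  ext v
  rw [curryLeft_apply_apply, curryLeft_apply_apply, neg_apply, curryLeft_apply_apply,
    curryLeft_apply_apply, ← f.map_swap (i := 0) (j := 1) _ Fin.zero_ne_one]
  congr 1
  ext i
  refine Fin.cases ?_ (Fin.cases ?_ fun k => ?_) i
  · simp
  · simp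
  · simp [Equiv.swap_apply_of_ne_of_ne (Fin.succ_ne_zero _) (Fin.succ_succ_ne_one k)]

theorem curryLeft_curryLeft_eq_zero_of_mem_span {f : M [⋀^Fin (n + 2)]→ₗ[R] N} {x y : M}
    (hf : (f.curryLeft x).curryLeft y = 0) {u w : M} (hu : u ∈ Submodule.span R {x, y})
    (hw : w ∈ Submodule.span R {x, y}) : (f.curryLeft u).curryLeft w = 0 := by
  obtain ⟨a, b, rfl⟩ := Submodule.mem_span_pair.1 hu
  obtain ⟨c, d, rfl⟩ := Submodule.mem_span_pair.1 hw
  simp [curryLeft_curryLeft_swap f x y, hf]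

theorem curryLeft_curryLeft_compLinearMap_eq_zero {f : M [⋀^Fin (n + 2)]→ₗ[R] N} {x y : M}
    (hf : (f.curryLeft x).curryLeft y = 0) {g : M →ₗ[R] M}
    (hx : g x ∈ Submodule.span R {x, y}) (hy : g y ∈ Submodule.span R {x, y}) :
    ((f.compLinearMap g).curryLeft x).curryLeft y = 0 := by
  rw [curryLeft_compLinearMap, curryLeft_compLinearMap,
    curryLeft_curryLeft_eq_zero_of_mem_span hf hx hy, zero_compLinearMap]

end AlternatingMap

namespace Module.Basis

variable {ι R M N : Type*} [CommRing R] [AddCommGroup M] [Module R M] [AddCommGroup N] [Module R N]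

theorem ext_alternating_of_strictMono [LinearOrder ι] (b : Basis ι R M) {n : ℕ}
    {f g : M [⋀^Fin n]→ₗ[R] N} (h : ∀ s : Fin n → ι, StrictMono s → f (b ∘ s) = g (b ∘ s)) :
    f = g := by
  refine b.ext_alternating fun v hv => ?_
  have hsort : StrictMono (v ∘ Tuple.sort v) :=
    (Tuple.monotone_sort v).strictMono_of_injective (hv.comp (Tuple.sort v).injective)
  have hv' : (fun i => b (v i)) = (b ∘ v ∘ Tuple.sort v) ∘ (Tuple.sort v).symm := by
    ext i; simp
  rw [hv', f.map_perm, g.map_perm, h _ hsort]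

theorem curryLeft_curryLeft_eq_zero_of_forall_strictMono [LinearOrder ι] (b : Basis ι R M)
    {n : ℕ} {f : M [⋀^Fin (n + 2)]→ₗ[R] N} {i j : ι}
    (h : ∀ t : Fin (n + 2) → ι, StrictMono t → (∃ k, t k = i) → (∃ k, t k = j) → f (b ∘ t) = 0) :
    (f.curryLeft (b i)).curryLeft (b j) = 0 := by
  refine b.ext_alternating fun s _ => ?_
  set w : Fin (n + 2) → ι := Matrix.vecCons i (Matrix.vecCons j s)
  have hw : Matrix.vecCons (b i) (Matrix.vecCons (b j) fun k => b (s k)) = b ∘ w := by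
    ext k
    refine Fin.cases ?_ (Fin.cases ?_ fun _ => ?_) k <;> simp [w]
  rw [AlternatingMap.curryLeft_apply_apply, AlternatingMap.curryLeft_apply_apply, hw,
    AlternatingMap.zero_apply]
  by_cases hinj : Function.Injective w
  · have hsort : StrictMono (w ∘ Tuple.sort w) :=
      (Tuple.monotone_sort w).strictMono_of_injective (hinj.comp (Tuple.sort w).injective)
    have hperm : b ∘ w = (b ∘ w ∘ Tuple.sort w) ∘ (Tuple.sort w).symm := by
      ext k; simp
    rw [hperm, f.map_perm, h _ hsort ⟨(Tuple.sort w).symm 0, by simp [w]⟩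
      ⟨(Tuple.sort w).symm 1, by simp [w]⟩, smul_zero]
  · exact f.map_eq_zero_of_not_injective _ fun hbw => hinj (hbw.of_comp)

theorem map_update_self [Fintype ι] [DecidableEq ι] (b : Basis ι R M) (φ : M [⋀^ι]→ₗ[R] N)
    (d : ι) (w : M) : φ (Function.update b d w) = b.repr w d • φ b := by
  conv_lhs => rw [← b.sum_repr w]
  rw [AlternatingMap.map_update_sum, Finset.sum_eq_single d]
  · rw [AlternatingMap.map_update_smul, Function.update_eq_self]
  · intro k _ hkd
    rw [AlternatingMap.map_update_smul,
      φ.map_eq_zero_of_eq _ (i := k) (j := d) (by simp [hkd]) hkd, smul_zero]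
  · simp

theorem mem_span_pair_of_repr_eq_zero (b : Basis ι R M) {i j : ι} {v : M}
    (h : ∀ k, k ≠ i → k ≠ j → b.repr v k = 0) : v ∈ Submodule.span R {b i, b j} := by
  rw [← Set.image_pair, b.mem_span_image]
  intro k hk
  by_contra hkij
  simp only [Set.mem_insert_iff, Set.mem_singleton_iff, not_or] at hkij
  exact Finsupp.mem_support_iff.1 hk (h k hkij.1 hkij.2)

theorem repr_eq_zero_of_curryLeft_removeNth {K V : Type*} [Field K] [AddCommGroup V]
    [Module K V] {n : ℕ} (b : Basis (Fin (n + 1)) K V) {φ : V [⋀^Fin (n + 1)]→ₗ[K] K}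
    (hφ : φ ≠ 0) {w : V} {d : Fin (n + 1)} (h : φ.curryLeft w (Fin.removeNth d b) = 0) :
    b.repr w d = 0 := by
  have key := φ.map_insertNth d w (Fin.removeNth d b)
  rw [Fin.insertNth_removeNth, b.map_update_self, ← AlternatingMap.curryLeft_apply_apply, h,
    smul_zero] at key
  exact (smul_eq_zero.1 key).resolve_right ((φ.map_basis_ne_zero_iff b).2 hφ)

end Module.Basis

namespace StableForms

variable {V : Type} [AddCommGroup V] [Module ℝ V]

theorem wedge_sub_right {k l : ℕ} (f : V [⋀^Fin k]→ₗ[ℝ] ℝ) (g h : V [⋀^Fin l]→ₗ[ℝ] ℝ) :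
    wedge f (g - h) = wedge f g - wedge f h := by
  simp only [wedge, ← AlternatingMap.domCoprod'_apply, TensorProduct.tmul_sub, map_sub]
  ext v
  simp

theorem wedge_zero_right {k l : ℕ} (f : V [⋀^Fin k]→ₗ[ℝ] ℝ) :
    wedge f (0 : V [⋀^Fin l]→ₗ[ℝ] ℝ) = 0 := by
  simpa using wedge_sub_right f 0 0

theorem wedge_zero_left {k l : ℕ} (g : V [⋀^Fin l]→ₗ[ℝ] ℝ) :
    wedge (0 : V [⋀^Fin k]→ₗ[ℝ] ℝ) g = 0 := by
  simp only [wedge, ← AlternatingMap.domCoprod'_apply, TensorProduct.zero_tmul, map_zero]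
  ext v
  simp

theorem wedge_apply_eq_zero {k l : ℕ} {f : V [⋀^Fin k]→ₗ[ℝ] ℝ} {g : V [⋀^Fin l]→ₗ[ℝ] ℝ}
    {x y : V} (hf : ∀ v i, v i = x ∨ v i = y → f v = 0)
    (hg : ∀ v i j, i ≠ j → v i = x → v j = y → g v = 0) {u : Fin (k + l) → V} {i j : Fin (k + l)}
    (hij : i ≠ j) (hx : u i = x) (hy : u j = y) : wedge f g u = 0 := by
  simp only [wedge, AlternatingMap.domDomCongr_apply, LinearMap.compAlternatingMap_apply,
    AlternatingMap.domCoprod_apply]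
  rw [sum_apply, Finset.sum_eq_zero, map_zero]
  intro σ _
  induction σ using Quotient.inductionOn' with | _ σ
  rw [AlternatingMap.domCoprod.summand_mk'']
  simp only [smul_apply, MultilinearMap.domDomCongr_apply, MultilinearMap.domCoprod_apply,
    Function.comp_apply, AlternatingMap.coe_multilinearMap]
  set uf := fun a => u (finSumFinEquiv (σ (Sum.inl a)))
  set ug := fun b => u (finSumFinEquiv (σ (Sum.inr b)))
  rcases hi : σ⁻¹ (finSumFinEquiv.symm i) with a | a
  · rw [hf uf a (.inl (by simp [uf, ← hi, hx])), TensorProduct.zero_tmul, smul_zero]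
  rcases hj : σ⁻¹ (finSumFinEquiv.symm j) with b | b
  · rw [hf uf b (.inr (by simp [uf, ← hj, hy])), TensorProduct.zero_tmul, smul_zero]
  have hab : a ≠ b := by
    rintro rfl
    exact hij (by simpa using hi.trans hj.symm)
  rw [hg ug a b hab (by simp [ug, ← hi, hx]) (by simp [ug, ← hj, hy]), TensorProduct.tmul_zero,
    smul_zero]

theorem IsJ.mem_span_pair {ρ : V [⋀^Fin 3]→ₗ[ℝ] ℝ} {K : V →ₗ[ℝ] V ⊗[ℝ] (V [⋀^Fin 6]→ₗ[ℝ] ℝ)}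
    {φ : V [⋀^Fin 6]→ₗ[ℝ] ℝ} {J : V →ₗ[ℝ] V} (hJ : IsJ K φ J) (hK : IsK ρ K) (hφ : φ ≠ 0)
    (b : Basis (Fin 6) ℝ V) {i j : Fin 6} (hij : i ≠ j)
    (hρ : (ρ.curryLeft (b i)).curryLeft (b j) = 0) {z : V}
    (hz : z ∈ Submodule.span ℝ {b i, b j}) : J z ∈ Submodule.span ℝ {b i, b j} := by
  have hφJ : φ.curryLeft (J z) = wedge (ρ.curryLeft z) ρ := by
    rw [← hK z, hJ z]
    rfl
  refine b.mem_span_pair_of_repr_eq_zero fun d hdi hdj =>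
    b.repr_eq_zero_of_curryLeft_removeNth hφ ?_
  obtain ⟨ki, hki⟩ := Fin.exists_succAbove_eq hdi.symm
  obtain ⟨kj, hkj⟩ := Fin.exists_succAbove_eq hdj.symm
  have hzi := AlternatingMap.curryLeft_curryLeft_eq_zero_of_mem_span hρ hz
    (Submodule.subset_span (Set.mem_insert (b i) {b j}))
  have hzj := AlternatingMap.curryLeft_curryLeft_eq_zero_of_mem_span hρ hz
    (Submodule.subset_span (Set.mem_insert_of_mem (b i) rfl))
  rw [hφJ]
  exact wedge_apply_eq_zero (f := ρ.curryLeft z) (g := ρ)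
    (fun v m hm => hm.elim (AlternatingMap.map_eq_zero_of_curryLeft_eq_zero hzi)
      (AlternatingMap.map_eq_zero_of_curryLeft_eq_zero hzj))
    (fun v m m' => AlternatingMap.map_eq_zero_of_curryLeft_curryLeft_eq_zero hρ)
    (i := ki) (j := kj) (by rintro rfl; exact hij (hki.symm.trans hkj))
    (by simp [Fin.removeNth, hki]) (by simp [Fin.removeNth, hkj])

def detForm {N : ℕ} (L : Fin N → Module.Dual ℝ V) : V [⋀^Fin N]→ₗ[ℝ] ℝ :=
  MultilinearMap.alternatization ((MultilinearMap.mkPiAlgebra ℝ (Fin N) ℝ).compLinearMap L)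

theorem detForm_apply {N : ℕ} (L : Fin N → Module.Dual ℝ V) (v : Fin N → V) :
    detForm L v = (Matrix.of fun i j => L j (v i)).det := by
  simp [detForm, MultilinearMap.alternatization_apply, Matrix.det_apply]

theorem oneForm_eq_detForm (l : Module.Dual ℝ V) : oneForm l = detForm ![l] := by
  ext v
  simp [detForm_apply, oneForm, Matrix.det_unique]

theorem wedge_detForm {k l : ℕ} (A : Fin k → Module.Dual ℝ V) (B : Fin l → Module.Dual ℝ V) :
    wedge (detForm A) (detForm B) = detForm (Fin.append A B) := by
  ext v
  simp only [wedge, detForm, ← MultilinearMap.domCoprod_alternization]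
  simp only [AlternatingMap.domDomCongr_apply, LinearMap.compAlternatingMap_apply,
    MultilinearMap.alternatization_apply, map_sum]
  refine Fintype.sum_equiv finSumFinEquiv.permCongr _ _ fun σ => ?_
  simp [Fin.prod_univ_add, Equiv.Perm.sign_permCongr, Equiv.permCongr_apply]

theorem detForm_eq_zero {N : ℕ} {L : Fin N → Module.Dual ℝ V} (hL : ¬ Function.Injective L) :
    detForm L = 0 := by
  obtain ⟨i, j, hLij, hij⟩ : ∃ i j, L i = L j ∧ i ≠ j := by
    simpa [Function.Injective] using hL
  ext v
  rw [detForm_apply, Matrix.det_zero_of_column_eq hij (by simp [hLij]), AlternatingMap.zero_apply]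

variable {ι : Type*} [LinearOrder ι] (b : Basis ι ℝ V)

theorem detForm_coord_apply_basis {N : ℕ} {r s : Fin N → ι} (hr : StrictMono r)
    (hs : StrictMono s) :
    detForm (fun m => b.coord (r m)) (b ∘ s) = if r = s then 1 else 0 := by
  have hM : (Matrix.of fun i j => b.coord (r j) ((b ∘ s) i)) =
      Matrix.of fun i j => if s i = r j then 1 else 0 := by
    ext i j; simp [Finsupp.single_apply]
  rw [detForm_apply, hM]
  split_ifs with hrs
  · subst hrs
    have h1 : (Matrix.of fun i j => if r i = r j then (1 : ℝ) else 0) = 1 := by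
      ext i j; simp [Matrix.one_apply, hr.injective.eq_iff]
    rw [h1, Matrix.det_one]
  · obtain ⟨j, hj⟩ : ∃ j, ∀ i, s i ≠ r j := by
      by_contra! h
      have hsub : Finset.univ.image r ⊆ Finset.univ.image s := by
        simpa [Finset.subset_iff, eq_comm] using h
      have heq := Finset.eq_of_subset_of_card_le hsub (by
        rw [Finset.card_image_of_injective _ hr.injective,
          Finset.card_image_of_injective _ hs.injective])
      refine hrs ((hr.range_inj hs).1 ?_)
      simpa [← Set.image_univ] using congrArg (fun t : Finset ι => (t : Set ι)) heq
    exact Matrix.det_eq_zero_of_column_eq_zero j fun i => by simp [hj i]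

theorem eq_sum_detForm {N : ℕ} (f : V [⋀^Fin N]→ₗ[ℝ] ℝ) {S : Finset (Fin N → ι)}
    (hS : ∀ s, s ∈ S ↔ StrictMono s) :
    f = ∑ s ∈ S, f (b ∘ s) • detForm (fun m => b.coord (s m)) := by
  refine b.ext_alternating_of_strictMono fun t ht => ?_
  rw [AlternatingMap.sum_apply, Finset.sum_eq_single t]
  · simp [detForm_coord_apply_basis b ht ht]
  · intro s hs hst
    rw [AlternatingMap.smul_apply, detForm_coord_apply_basis b ((hS s).1 hs) ht, if_neg hst,
      smul_zero]
  · exact fun h => absurd ((hS t).2 ht) h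

end StableForms

namespace H3H3

open StableForms

local notation "𝐞" => Pi.basisFun ℝ (Fin 6)

def dualWedge {N : ℕ} (r : Fin N → Fin 6) : V6 [⋀^Fin N]→ₗ[ℝ] ℝ :=
  detForm fun m => (𝐞).coord (r m)

theorem p_eq_dualWedge (i : Fin 6) : p i = dualWedge ![i] := by
  rw [p, oneForm_eq_detForm, dualWedge]
  congr 1
  ext m v
  fin_cases m
  simp

theorem wedge_dualWedge {k l : ℕ} (r : Fin k → Fin 6) (s : Fin l → Fin 6) :
    wedge (dualWedge r) (dualWedge s) = dualWedge (Fin.append r s) := by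
  rw [dualWedge, dualWedge, wedge_detForm, dualWedge]
  congr 1
  ext m
  refine Fin.addCases (fun i => ?_) (fun i => ?_) m <;> simp

theorem dualWedge_eq_zero {N : ℕ} {r : Fin N → Fin 6} (hr : ¬ Function.Injective r) :
    dualWedge r = 0 :=
  detForm_eq_zero fun h => hr (Function.Injective.of_comp (f := fun i => (𝐞).coord i) h)

theorem dualWedge_apply_basis {N : ℕ} {r s : Fin N → Fin 6} (hr : StrictMono r)
    (hs : StrictMono s) : dualWedge r (𝐞 ∘ s) = if r = s then 1 else 0 :=
  detForm_coord_apply_basis _ hr hs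

-- Instances of `wedge_dualWedge` with the appended tuple written out, so that `simp` can use them.
theorem wedge_dualWedge_one_one (a b : Fin 6) :
    wedge (dualWedge ![a]) (dualWedge ![b]) = (dualWedge ![a, b] : V6 [⋀^Fin 2]→ₗ[ℝ] ℝ) := by
  rw [wedge_dualWedge]; congr 1; ext m; fin_cases m <;> rfl

theorem wedge_dualWedge_one_two (a b c : Fin 6) :
    wedge (dualWedge ![a]) (dualWedge ![b, c]) = (dualWedge ![a, b, c] : V6 [⋀^Fin 3]→ₗ[ℝ] ℝ) := by
  rw [wedge_dualWedge]; congr 1; ext m; fin_cases m <;> rfl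

theorem wedge_dualWedge_two_one (a b c : Fin 6) :
    wedge (dualWedge ![a, b]) (dualWedge ![c]) = (dualWedge ![a, b, c] : V6 [⋀^Fin 3]→ₗ[ℝ] ℝ) := by
  rw [wedge_dualWedge]; congr 1; ext m; fin_cases m <;> rfl

theorem wedge_dualWedge_one_three (a b c d : Fin 6) :
    wedge (dualWedge ![a]) (dualWedge ![b, c, d]) =
      (dualWedge ![a, b, c, d] : V6 [⋀^Fin 4]→ₗ[ℝ] ℝ) := by
  rw [wedge_dualWedge]; congr 1; ext m; fin_cases m <;> rfl

theorem wedge_dualWedge_two_two (a b c d : Fin 6) :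
    wedge (dualWedge ![a, b]) (dualWedge ![c, d]) =
      (dualWedge ![a, b, c, d] : V6 [⋀^Fin 4]→ₗ[ℝ] ℝ) := by
  rw [wedge_dualWedge]; congr 1; ext m; fin_cases m <;> rfl

theorem wedge_dualWedge_three_one (a b c d : Fin 6) :
    wedge (dualWedge ![a, b, c]) (dualWedge ![d]) =
      (dualWedge ![a, b, c, d] : V6 [⋀^Fin 4]→ₗ[ℝ] ℝ) := by
  rw [wedge_dualWedge]; congr 1; ext m; fin_cases m <;> rfl

def sortedTriples : Finset (Fin 3 → Fin 6) :=
  {![0, 1, 2], ![0, 1, 3], ![0, 1, 4], ![0, 1, 5], ![0, 2, 3], ![0, 2, 4], ![0, 2, 5],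
   ![0, 3, 4], ![0, 3, 5], ![0, 4, 5], ![1, 2, 3], ![1, 2, 4], ![1, 2, 5], ![1, 3, 4],
   ![1, 3, 5], ![1, 4, 5], ![2, 3, 4], ![2, 3, 5], ![2, 4, 5], ![3, 4, 5]}

theorem mem_sortedTriples (t : Fin 3 → Fin 6) : t ∈ sortedTriples ↔ StrictMono t := by
  rw [Fin.strictMono_iff_lt_succ]
  revert t
  decide +kernel

structure IsCEDifferential (d1 : (V6 [⋀^Fin 1]→ₗ[ℝ] ℝ) →ₗ[ℝ] (V6 [⋀^Fin 2]→ₗ[ℝ] ℝ))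
    (d2 : (V6 [⋀^Fin 2]→ₗ[ℝ] ℝ) →ₗ[ℝ] (V6 [⋀^Fin 3]→ₗ[ℝ] ℝ))
    (d3 : (V6 [⋀^Fin 3]→ₗ[ℝ] ℝ) →ₗ[ℝ] (V6 [⋀^Fin 4]→ₗ[ℝ] ℝ)) : Prop where
  d1_p0 : d1 (p 0) = 0
  d1_p1 : d1 (p 1) = 0
  d1_p3 : d1 (p 3) = 0
  d1_p4 : d1 (p 4) = 0
  d1_p2 : d1 (p 2) = wedge (p 0) (p 1)
  d1_p5 : d1 (p 5) = wedge (p 3) (p 4)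
  d2_wedge : ∀ a b : V6 [⋀^Fin 1]→ₗ[ℝ] ℝ, d2 (wedge a b) = wedge (d1 a) b - wedge a (d1 b)
  d3_wedge : ∀ (a : V6 [⋀^Fin 1]→ₗ[ℝ] ℝ) (b : V6 [⋀^Fin 2]→ₗ[ℝ] ℝ),
    d3 (wedge a b) = wedge (d1 a) b - wedge a (d2 b)

namespace IsCEDifferential

variable {d1 : (V6 [⋀^Fin 1]→ₗ[ℝ] ℝ) →ₗ[ℝ] (V6 [⋀^Fin 2]→ₗ[ℝ] ℝ)}
  {d2 : (V6 [⋀^Fin 2]→ₗ[ℝ] ℝ) →ₗ[ℝ] (V6 [⋀^Fin 3]→ₗ[ℝ] ℝ)}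
  {d3 : (V6 [⋀^Fin 3]→ₗ[ℝ] ℝ) →ₗ[ℝ] (V6 [⋀^Fin 4]→ₗ[ℝ] ℝ)}

theorem d3_dualWedge (hd : IsCEDifferential d1 d2 d3) (i j k : Fin 6) :
    d3 (dualWedge ![i, j, k]) = wedge (d1 (p i)) (dualWedge ![j, k])
      - wedge (p i) (wedge (d1 (p j)) (p k) - wedge (p j) (d1 (p k))) := by
  rw [← wedge_dualWedge_one_two, ← wedge_dualWedge_one_one, ← p_eq_dualWedge, ← p_eq_dualWedge,
    ← p_eq_dualWedge, hd.d3_wedge, hd.d2_wedge, p_eq_dualWedge j, p_eq_dualWedge k,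
    wedge_dualWedge_one_one]

theorem d3_eq (hd : IsCEDifferential d1 d2 d3) (ρ : V6 [⋀^Fin 3]→ₗ[ℝ] ℝ) :
    d3 ρ = ρ (𝐞 ∘ ![0, 2, 5]) • dualWedge ![0, 2, 3, 4]
      + ρ (𝐞 ∘ ![1, 2, 5]) • dualWedge ![1, 2, 3, 4]
      + ρ (𝐞 ∘ ![2, 3, 5]) • dualWedge ![0, 1, 3, 5]
      + ρ (𝐞 ∘ ![2, 4, 5]) • dualWedge ![0, 1, 4, 5]
      + (ρ (𝐞 ∘ ![2, 3, 4]) + ρ (𝐞 ∘ ![0, 1, 5])) • dualWedge ![0, 1, 3, 4] := by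
  have hρ : ρ = ∑ t ∈ sortedTriples, ρ (𝐞 ∘ t) • dualWedge t :=
    eq_sum_detForm _ ρ mem_sortedTriples
  conv_lhs => rw [hρ]
  rw [map_sum]
  simp (disch := decide) only [sortedTriples, Finset.sum_insert, Finset.sum_singleton]
  simp only [map_smul, hd.d3_dualWedge, hd.d1_p0, hd.d1_p1, hd.d1_p2, hd.d1_p3, hd.d1_p4,
    hd.d1_p5]
  simp only [p_eq_dualWedge, wedge_dualWedge_one_one, wedge_dualWedge_one_two,
    wedge_dualWedge_two_one, wedge_dualWedge_one_three, wedge_dualWedge_two_two, wedge_zero_left,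
    wedge_zero_right, wedge_sub_right]
  simp (disch := decide) only [dualWedge_eq_zero]
  module

theorem curryLeft_curryLeft_eq_zero_of_d3_eq_zero (hd : IsCEDifferential d1 d2 d3)
    {ρ : V6 [⋀^Fin 3]→ₗ[ℝ] ℝ} (hρ : d3 ρ = 0) : (ρ.curryLeft (𝐞 2)).curryLeft (𝐞 5) = 0 := by
  have hcoeff : ∀ s : Fin 4 → Fin 6, d3 ρ (𝐞 ∘ s) = 0 := fun s => by
    rw [hρ, AlternatingMap.zero_apply]
  have h025 := hcoeff ![0, 2, 3, 4]
  have h125 := hcoeff ![1, 2, 3, 4]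
  have h235 := hcoeff ![0, 1, 3, 5]
  have h245 := hcoeff ![0, 1, 4, 5]
  simp (disch := rw [Fin.strictMono_iff_lt_succ]; decide) only [hd.d3_eq, AlternatingMap.add_apply,
    AlternatingMap.smul_apply, dualWedge_apply_basis] at h025 h125 h235 h245
  simp only [↓reduceIte, smul_eq_mul, mul_one, mul_zero, add_zero, zero_add, Matrix.vecCons_inj,
    one_ne_zero, zero_ne_one, Fin.reduceEq, and_true, and_false, and_self] at h025 h125 h235 h245
  refine (𝐞).curryLeft_curryLeft_eq_zero_of_forall_strictMono fun t ht h2 h5 => ?_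
  obtain rfl | rfl | rfl | rfl :
      t = ![0, 2, 5] ∨ t = ![1, 2, 5] ∨ t = ![2, 3, 5] ∨ t = ![2, 4, 5] := by
    have ht' := (mem_sortedTriples t).2 ht
    revert t
    decide +kernel
  all_goals assumption

theorem d3_mem_quadU (hd : IsCEDifferential d1 d2 d3) {ρ : V6 [⋀^Fin 3]→ₗ[ℝ] ℝ}
    (hρ : (ρ.curryLeft (𝐞 2)).curryLeft (𝐞 5) = 0) : d3 ρ ∈ quadU := by
  have h025 : ρ (𝐞 ∘ ![0, 2, 5]) = 0 :=
    AlternatingMap.map_eq_zero_of_curryLeft_curryLeft_eq_zero hρ (i := 1) (j := 2) (by decide)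
      rfl rfl
  have h125 : ρ (𝐞 ∘ ![1, 2, 5]) = 0 :=
    AlternatingMap.map_eq_zero_of_curryLeft_curryLeft_eq_zero hρ (i := 1) (j := 2) (by decide)
      rfl rfl
  have h235 : ρ (𝐞 ∘ ![2, 3, 5]) = 0 :=
    AlternatingMap.map_eq_zero_of_curryLeft_curryLeft_eq_zero hρ (i := 0) (j := 2) (by decide)
      rfl rfl
  have h245 : ρ (𝐞 ∘ ![2, 4, 5]) = 0 :=
    AlternatingMap.map_eq_zero_of_curryLeft_curryLeft_eq_zero hρ (i := 0) (j := 2) (by decide)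
      rfl rfl
  have hQ : wedge (wedge (wedge (p 0) (p 1)) (p 3)) (p 4) = dualWedge ![0, 1, 3, 4] := by
    simp only [p_eq_dualWedge, wedge_dualWedge_one_one, wedge_dualWedge_two_one,
      wedge_dualWedge_three_one]
  have hU : ∀ x ∈ ({p 0, p 1, p 3, p 4} : Set _), x ∈ U := fun x hx => Submodule.subset_span hx
  rw [hd.d3_eq, h025, h125, h235, h245, ← hQ]
  simp only [zero_smul, zero_add]
  exact Submodule.smul_mem _ _ (Submodule.subset_span
    ⟨p 0, p 1, p 3, p 4, hU _ (by simp), hU _ (by simp), hU _ (by simp), hU _ (by simp), rfl⟩)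

end IsCEDifferential

end H3H3

open StableForms H3H3 in
theorem stmt17_general
    (d1 : (V6 [⋀^Fin 1]→ₗ[ℝ] ℝ) →ₗ[ℝ] (V6 [⋀^Fin 2]→ₗ[ℝ] ℝ))
    (d2 : (V6 [⋀^Fin 2]→ₗ[ℝ] ℝ) →ₗ[ℝ] (V6 [⋀^Fin 3]→ₗ[ℝ] ℝ))
    (d3 : (V6 [⋀^Fin 3]→ₗ[ℝ] ℝ) →ₗ[ℝ] (V6 [⋀^Fin 4]→ₗ[ℝ] ℝ))
    (hd10 : d1 (p 0) = 0) (hd11 : d1 (p 1) = 0) (hd13 : d1 (p 3) = 0) (hd14 : d1 (p 4) = 0)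
    (hd12 : d1 (p 2) = wedge (p 0) (p 1)) (hd15 : d1 (p 5) = wedge (p 3) (p 4))
    (hd2 : ∀ a b : V6 [⋀^Fin 1]→ₗ[ℝ] ℝ,
      d2 (wedge a b) = wedge (d1 a) b - wedge a (d1 b))
    (hd3 : ∀ (a : V6 [⋀^Fin 1]→ₗ[ℝ] ℝ) (b : V6 [⋀^Fin 2]→ₗ[ℝ] ℝ),
      d3 (wedge a b) = wedge (d1 a) b - wedge a (d2 b))
    (ρ : V6 [⋀^Fin 3]→ₗ[ℝ] ℝ) (hclosed : d3 ρ = 0)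
    (K : V6 →ₗ[ℝ] V6 ⊗[ℝ] (V6 [⋀^Fin 6]→ₗ[ℝ] ℝ)) (hK : IsK ρ K)
    (o : Orientation ℝ V6 (Fin 6))
    (φ : V6 [⋀^Fin 6]→ₗ[ℝ] ℝ) (hφ : IsVolOf o K φ)
    (J : V6 →ₗ[ℝ] V6) (hJ : IsJ K φ J) :
    d3 (ρ.compLinearMap J) ∈ quadU := by
  have hd : IsCEDifferential d1 d2 d3 := ⟨hd10, hd11, hd13, hd14, hd12, hd15, hd2, hd3⟩
  obtain ⟨hφ0, -⟩ := hφ.1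
  have hρ := hd.curryLeft_curryLeft_eq_zero_of_d3_eq_zero hclosed
  have hJ25 : ∀ z ∈ Submodule.span ℝ {Pi.basisFun ℝ (Fin 6) 2, Pi.basisFun ℝ (Fin 6) 5},
      J z ∈ Submodule.span ℝ {Pi.basisFun ℝ (Fin 6) 2, Pi.basisFun ℝ (Fin 6) 5} :=
    fun z hz => hJ.mem_span_pair hK hφ0 _ (by decide) hρ hz
  exact hd.d3_mem_quadU (AlternatingMap.curryLeft_curryLeft_compLinearMap_eq_zero hρ
    (hJ25 _ (Submodule.subset_span (Set.mem_insert _ _)))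
    (hJ25 _ (Submodule.subset_span (Set.mem_insert_of_mem _ rfl))))

open StableForms H3H3 in
theorem stmt17
    (d1 : (V6 [⋀^Fin 1]→ₗ[ℝ] ℝ) →ₗ[ℝ] (V6 [⋀^Fin 2]→ₗ[ℝ] ℝ))
    (d2 : (V6 [⋀^Fin 2]→ₗ[ℝ] ℝ) →ₗ[ℝ] (V6 [⋀^Fin 3]→ₗ[ℝ] ℝ))
    (d3 : (V6 [⋀^Fin 3]→ₗ[ℝ] ℝ) →ₗ[ℝ] (V6 [⋀^Fin 4]→ₗ[ℝ] ℝ))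
    (hd10 : d1 (p 0) = 0) (hd11 : d1 (p 1) = 0) (hd13 : d1 (p 3) = 0) (hd14 : d1 (p 4) = 0)
    (hd12 : d1 (p 2) = wedge (p 0) (p 1)) (hd15 : d1 (p 5) = wedge (p 3) (p 4))
    (hd2 : ∀ a b : V6 [⋀^Fin 1]→ₗ[ℝ] ℝ,
      d2 (wedge a b) = wedge (d1 a) b - wedge a (d1 b))
    (hd3 : ∀ (a : V6 [⋀^Fin 1]→ₗ[ℝ] ℝ) (b : V6 [⋀^Fin 2]→ₗ[ℝ] ℝ),
      d3 (wedge a b) = wedge (d1 a) b - wedge a (d2 b))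
    (ρ : V6 [⋀^Fin 3]→ₗ[ℝ] ℝ) (hclosed : d3 ρ = 0)
    (K : V6 →ₗ[ℝ] V6 ⊗[ℝ] (V6 [⋀^Fin 6]→ₗ[ℝ] ℝ)) (hK : IsK ρ K)
    (hstable : lam K ≠ 0)
    (o : Orientation ℝ V6 (Fin 6)) (ho : ∃ hE : E6 ≠ 0, rayOfNeZero ℝ E6 hE = o)
    (φ : V6 [⋀^Fin 6]→ₗ[ℝ] ℝ) (hφ : IsVolOf o K φ)
    (J : V6 →ₗ[ℝ] V6) (hJ : IsJ K φ J) :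
    d3 (ρ.compLinearMap J) ∈ quadU :=
  stmt17_general d1 d2 d3 hd10 hd11 hd13 hd14 hd12 hd15 hd2 hd3 ρ hclosed K hK o φ hφ J hJ
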